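/- The first moment of R_{η}^{(α,β)} satisfies R_{η}^{(α,β)}(t; x) = x + (1+α)/η; in particular it is independent of β. -/

import Mathlib

open Real MeasureTheory Filter Set

/-- Generalized Laguerre polynomial `L_κ^{(α)}(x)`. -/
noncomputable def lag (κ : ℕ) (α x : ℝ) : ℝ :=
  ∑ ι ∈ Finset.range (κ + 1),
    (-1 : ℝ) ^ ι / (Nat.factorial ι) *
      ((∏ s ∈ Finset.range (κ - ι), (α + ι + 1 + s)) / (Nat.factorial (κ - ι))) * x ^ ι
/-- Gamma-type kernel `I_{κ,η}^β(z)`. -/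
noncomputable def ker (η β : ℝ) (κ : ℕ) (z : ℝ) : ℝ :=
  η * β * Real.exp (-(η * β * z)) * (η * β * z) ^ ((κ : ℝ) * β - 1) / Real.Gamma ((κ : ℝ) * β)
/-- The operators `R_η^{(α,β)}(Φ; x)`, with the `κ = 0` term interpreted as `Φ(0)·(coefficient)`. -/
noncomputable def Rop (η β α : ℝ) (Φ : ℝ → ℝ) (x : ℝ) : ℝ :=
  Real.exp (-(η * x) / 2) * (2 : ℝ) ^ (-α - 1) *
    ∑' κ : ℕ, (2 : ℝ) ^ (-(κ : ℝ)) * lag κ α (-(η * x) / 2) *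
      (if κ = 0 then Φ 0 else ∫ z in Set.Ioi (0 : ℝ), ker η β κ z * Φ z)

/-!
Put `u = η x / 2`. The Gamma kernel `I_{κ,η}^β` has mean `κ / η` whatever `β` is, so
`R(t; x) = e^{-u} 2^{-α-1} η⁻¹ ∑_κ κ 2^{-κ} L_κ^{(α)}(-u)`. Expanding
`L_κ^{(α)}(-u) = ∑_{ι+m=κ} u^ι/ι! · (α+ι+1)_m/m!` turns this into a double series of
nonnegative terms. Summing over `m` first with the binomial series
`∑ (a)_m t^m/m! = (1-t)^{-a}` and its derivative at `t = 1/2`, then over `ι` with the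
exponential series, gives `∑_κ κ 2^{-κ} L_κ^{(α)}(-u) = 2^{α+1} e^u (α + 1 + 2u)`.
-/

open Finset
open scoped Nat

theorem HasSum.sum_antidiagonal {α A : Type*} [AddCommMonoid α] [TopologicalSpace α]
    [ContinuousAdd α] [T3Space α] [AddCommMonoid A] [HasAntidiagonal A] {f : A × A → α} {a : α}
    (h : HasSum f a) : HasSum (fun n => ∑ p ∈ antidiagonal n, f p) a :=
  (HasAntidiagonal.sigmaAntidiagonalEquivProd.hasSum_iff.mpr h).sigma fun n =>
    (antidiagonal n).hasSum f

theorem hasSum_prod_of_nonneg {β γ : Type*} {f : β × γ → ℝ} {g : β → ℝ} {a : ℝ} (hf : 0 ≤ f)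
    (hrow : ∀ b, HasSum (fun c => f (b, c)) (g b)) (hg : HasSum g a) : HasSum f a := by
  have hsum : Summable f := (summable_prod_of_nonneg hf).mpr
    ⟨fun b => (hrow b).summable, hg.summable.congr fun b => ((hrow b).tsum_eq).symm⟩
  exact (hsum.hasSum.prod_fiberwise hrow).unique hg ▸ hsum.hasSum

theorem ascPochhammer_eval_eq_prod_range {R : Type*} [CommSemiring R] (n : ℕ) (r : R) :
    (ascPochhammer R n).eval r = ∏ j ∈ range n, (r + j) := by
  induction n with
  | zero => simp
  | succ n ih => simp [ascPochhammer_succ_right, ih, ← prod_range_succ]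

theorem Ring.choose_add_sub_one_eq_prod_div_factorial {K : Type*} [Field K] [CharZero K]
    [BinomialRing K] (a : K) (n : ℕ) :
    Ring.choose (a + n - 1) n = (∏ s ∈ range n, (a + s)) / n ! := by
  have h := Ring.factorial_nsmul_multichoose_eq_ascPochhammer a n
  rw [Polynomial.ascPochhammer_smeval_eq_eval, nsmul_eq_mul, ascPochhammer_eval_eq_prod_range] at h
  rw [← Ring.multichoose_eq, eq_div_iff (Nat.cast_ne_zero.mpr n.factorial_ne_zero), mul_comm, h]

theorem hasSum_prod_add_div_factorial_mul_pow {t : ℝ} (a : ℝ) (ht : |t| < 1) :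
    HasSum (fun n : ℕ => (∏ s ∈ range n, (a + s)) / n ! * t ^ n) (1 / (1 - t) ^ a) := by
  have h := (Real.one_div_one_sub_rpow_hasFPowerSeriesOnBall_zero a).hasSum
    (y := t) (by simpa [mem_eball_zero_iff, enorm_eq_nnnorm, ← NNReal.coe_lt_coe] using ht)
  simpa [FormalMultilinearSeries.ofScalars_apply_eq,
    Ring.choose_add_sub_one_eq_prod_div_factorial, mul_comm] using h

theorem hasSum_mul_prod_add_div_factorial_mul_pow {t : ℝ} (a : ℝ) (ht : |t| < 1) :
    HasSum (fun n : ℕ => n * ((∏ s ∈ range n, (a + s)) / n !) * t ^ n)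
      (a * t / (1 - t) ^ (a + 1)) := by
  refine (hasSum_nat_add_iff' 1).mp ?_
  have h := (hasSum_prod_add_div_factorial_mul_pow (a + 1) ht).mul_left (a * t)
  simp only [range_one, sum_singleton, CharP.cast_eq_zero, zero_mul, sub_zero]
  rw [mul_one_div] at h
  refine h.congr_fun fun n => ?_
  rw [prod_range_succ', Nat.factorial_succ]
  simp only [add_assoc, add_comm (1 : ℝ)]
  push_cast
  field_simp
  ring

theorem Real.hasSum_pow_div_factorial (u : ℝ) : HasSum (fun n : ℕ => u ^ n / n !) (exp u) := by
  rw [Real.exp_eq_exp_ℝ]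
  exact NormedSpace.expSeries_div_hasSum_exp u

theorem Real.hasSum_mul_pow_div_factorial (u : ℝ) :
    HasSum (fun n : ℕ => n * (u ^ n / n !)) (u * exp u) := by
  refine (hasSum_nat_add_iff' 1).mp ?_
  simp only [range_one, sum_singleton, CharP.cast_eq_zero, zero_mul, sub_zero]
  refine ((Real.hasSum_pow_div_factorial u).mul_left u).congr_fun fun n => ?_
  rw [Nat.factorial_succ]
  push_cast
  field_simp
  ring

theorem integral_Ioi_mul_exp_mul_rpow_div_Gamma_mul_self {l p : ℝ} (hl : 0 < l) (hp : 0 < p) :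
    ∫ z in Ioi (0 : ℝ), l * exp (-(l * z)) * (l * z) ^ (p - 1) / Gamma p * z = p / l := by
  have hintegrand : ∀ z ∈ Ioi (0 : ℝ), l * exp (-(l * z)) * (l * z) ^ (p - 1) / Gamma p * z
      = l ^ p / Gamma p * (z ^ (p + 1 - 1) * exp (-(l * z))) := by
    intro z hz
    have hz0 : z ≠ 0 := ne_of_gt hz
    rw [mul_rpow hl.le (le_of_lt hz), add_sub_cancel_right, rpow_sub_one hl.ne',
      rpow_sub_one hz0]
    field_simp
  have hΓ : Gamma p ≠ 0 := (Gamma_pos_of_pos hp).ne'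
  rw [setIntegral_congr_fun measurableSet_Ioi hintegrand, integral_const_mul,
    integral_rpow_mul_exp_neg_mul_Ioi (by linarith) hl, Gamma_add_one hp.ne',
    rpow_add_one (by positivity), one_div, inv_rpow hl.le]
  field_simp

theorem integral_ker_mul_self {η β : ℝ} (hη : 0 < η) (hβ : 0 < β) {κ : ℕ} (hκ : κ ≠ 0) :
    ∫ z in Ioi (0 : ℝ), ker η β κ z * z = κ / η := by
  rw [show (κ : ℝ) / η = κ * β / (η * β) by field_simp]
  exact integral_Ioi_mul_exp_mul_rpow_div_Gamma_mul_self (by positivity)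
    (by positivity [Nat.pos_of_ne_zero hκ])

theorem lag_neg_eq_sum_antidiagonal (κ : ℕ) (α u : ℝ) :
    lag κ α (-u) = ∑ p ∈ antidiagonal κ,
      u ^ p.1 / p.1 ! * ((∏ s ∈ range p.2, (α + p.1 + 1 + s)) / p.2 !) := by
  rw [lag, Nat.sum_antidiagonal_eq_sum_range_succ_mk]
  refine sum_congr rfl fun ι _ => ?_
  have hsign : (-1 : ℝ) ^ ι * (-u) ^ ι = u ^ ι := by rw [← mul_pow, neg_one_mul, neg_neg]
  rw [← hsign]
  ring

/-- The `(ι, m)` term of `∑_κ κ 2^{-κ} L_κ^{(α)}(-u)` after expanding `L_κ^{(α)}`, with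
`κ = ι + m`. -/
noncomputable def lagMomentTerm (α u : ℝ) (p : ℕ × ℕ) : ℝ :=
  ((p.1 + p.2 : ℕ) : ℝ) * (1 / 2) ^ (p.1 + p.2) *
    (u ^ p.1 / p.1 ! * ((∏ s ∈ range p.2, (α + p.1 + 1 + s)) / p.2 !))

theorem lagMomentTerm_nonneg {α u : ℝ} (hα : -1 < α) (hu : 0 ≤ u) : 0 ≤ lagMomentTerm α u := by
  intro p
  have hprod : 0 ≤ ∏ s ∈ range p.2, (α + p.1 + 1 + s) :=
    prod_nonneg fun s _ => by linarith [Nat.cast_nonneg (α := ℝ) p.1, Nat.cast_nonneg (α := ℝ) s]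
  unfold lagMomentTerm
  positivity

theorem hasSum_lagMomentTerm_row (α u : ℝ) (ι : ℕ) :
    HasSum (fun m => lagMomentTerm α u (ι, m))
      (2 ^ (α + 1) * ((α + 1 + 2 * ι) * (u ^ ι / ι !))) := by
  set a : ℝ := α + ι + 1
  have ht : |(1 / 2 : ℝ)| < 1 := by norm_num [abs_of_pos]
  have h := (((hasSum_prod_add_div_factorial_mul_pow a ht).mul_left (ι : ℝ)).add
    (hasSum_mul_prod_add_div_factorial_mul_pow a ht)).mul_left ((1 / 2) ^ ι * (u ^ ι / ι !))
  have hpow : (1 - 1 / 2 : ℝ) ^ a = (2 ^ (α + 1))⁻¹ * (1 / 2) ^ ι := by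
    rw [show a = (α + 1) + ι by ring, rpow_add (by norm_num), rpow_natCast,
      show (1 - 1 / 2 : ℝ) = 2⁻¹ by norm_num, inv_rpow (by norm_num), one_div]
  have hval : 2 ^ (α + 1) * ((α + 1 + 2 * ι) * (u ^ ι / ι !)) = (1 / 2) ^ ι * (u ^ ι / ι !) *
      (ι * (1 / (1 - 1 / 2) ^ a) + a * (1 / 2) / (1 - 1 / 2) ^ (a + 1)) := by
    rw [rpow_add_one (by norm_num : (1 - 1 / 2 : ℝ) ≠ 0) a, hpow]
    field_simp
    ring
  rw [hval]
  exact h.congr_fun fun m => by unfold lagMomentTerm; push_cast; ring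

theorem hasSum_mul_half_pow_mul_lag_neg {α u : ℝ} (hα : -1 < α) (hu : 0 ≤ u) :
    HasSum (fun κ : ℕ => κ * (1 / 2) ^ κ * lag κ α (-u))
      (2 ^ (α + 1) * exp u * (α + 1 + 2 * u)) := by
  have hcol : HasSum (fun ι : ℕ => 2 ^ (α + 1) * ((α + 1 + 2 * ι) * (u ^ ι / ι !)))
      (2 ^ (α + 1) * exp u * (α + 1 + 2 * u)) := by
    have h := (((Real.hasSum_pow_div_factorial u).mul_left (α + 1)).add
      ((Real.hasSum_mul_pow_div_factorial u).mul_left 2)).mul_left (2 ^ (α + 1))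
    rw [show 2 ^ (α + 1) * exp u * (α + 1 + 2 * u)
      = 2 ^ (α + 1) * ((α + 1) * exp u + 2 * (u * exp u)) by ring]
    exact h.congr_fun fun ι => by ring
  refine (hasSum_prod_of_nonneg (lagMomentTerm_nonneg hα hu) (hasSum_lagMomentTerm_row α u)
    hcol).sum_antidiagonal.congr_fun fun κ => ?_
  rw [lag_neg_eq_sum_antidiagonal, mul_sum]
  refine sum_congr rfl fun p hp => ?_
  rw [lagMomentTerm, mem_antidiagonal.mp hp]

/-- The first moment of `R_η^{(α,β)}` is independent of `β`. -/
theorem stmt7 (α β η x : ℝ) (hα : -1 < α) (hβ : 0 < β) (hη : 0 < η) (hx : 0 ≤ x) :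
    Rop η β α (fun t => t) x = x + (1 + α) / η := by
  have hterm (κ : ℕ) : (2 : ℝ) ^ (-(κ : ℝ)) * lag κ α (-(η * x) / 2) *
      (if κ = 0 then 0 else ∫ z in Ioi (0 : ℝ), ker η β κ z * z)
        = η⁻¹ * (κ * (1 / 2) ^ κ * lag κ α (-(η * x / 2))) := by
    rcases eq_or_ne κ 0 with rfl | hκ
    · simp
    · rw [if_neg hκ, integral_ker_mul_self hη hβ hκ, rpow_neg zero_le_two, rpow_natCast,
        neg_div, one_div, inv_pow]
      ring
  have hexp : exp (-(η * x) / 2) * exp (η * x / 2) = 1 := by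
    rw [← exp_add, neg_div, neg_add_cancel, exp_zero]
  have htwo : (2 : ℝ) ^ (-α - 1) * 2 ^ (α + 1) = 1 := by
    rw [← rpow_add two_pos, show -α - 1 + (α + 1) = 0 by ring, rpow_zero]
  unfold Rop
  beta_reduce
  rw [tsum_congr hterm, tsum_mul_left,
    (hasSum_mul_half_pow_mul_lag_neg hα (by positivity)).tsum_eq]
  calc _ = (exp (-(η * x) / 2) * exp (η * x / 2)) * (2 ^ (-α - 1) * 2 ^ (α + 1)) *
        ((α + 1 + η * x) / η) := by ring
    _ = x + (1 + α) / η := by rw [hexp, htwo]; field_simp; ring
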